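/- Let φ ∈ (0,1) and λ₁, λ₂ > 0. Let W be a Bernoulli random variable with P(W = 1) = 1 − φ, and let T₁ ~ Poisson(λ₁) and T₂ ~ Poisson(λ₂) be such that W, T₁, T₂ are mutually independent. Set (X₁, X₂) = (W·T₁, W·T₂). Then corr(X₁, X₂) = φ √( λ₁ λ₂ / ((1 + φλ₁)(1 + φλ₂)) ). -/

import Mathlib

/-!
Because `W ∈ {0, 1}`, every function `h` of `(X₁, X₂) = W • (T₁, T₂)` with `h 0 = 0` satisfies
`h (X₁, X₂) = W · h (T₁, T₂)`, so independence gives `E h(X₁, X₂) = (1 - φ) E h(T₁, T₂)`.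
Applied to `x₁ x₂`, `xᵢ` and `xᵢ²` together with the Poisson moments `E T = λ` and
`E T² = λ + λ²`, this yields `cov(X₁, X₂) = (1 - φ) φ λ₁ λ₂` and
`var Xᵢ = (1 - φ) λᵢ (1 + φ λᵢ)`.
-/

open MeasureTheory ProbabilityTheory
open scoped NNReal

lemma apply_nsmul_of_eq_zero_or_eq_one {M : Type*} [AddMonoid M] {h : M → ℝ} (h0 : h 0 = 0)
    {n : ℕ} (hn : n = 0 ∨ n = 1) (z : M) : h (n • z) = n * h z := by
  rcases hn with rfl | rfl <;> simp [h0]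

namespace ProbabilityTheory

section Poisson

open scoped Nat

variable (r : ℝ≥0)

/-- Since `n · P(N = n) = r · P(N = n - 1)`, `E[N g(N)] = r E[g(N + 1)]`. -/
lemma hasSum_poisson_mul_natCast_mul {g : ℕ → ℝ} {s : ℝ}
    (hg : HasSum (fun n ↦ Real.exp (-r) * r ^ n / n ! * g (n + 1)) s) :
    HasSum (fun n ↦ Real.exp (-r) * r ^ n / n ! * (n * g n)) (r * s) := by
  have shift (n : ℕ) : Real.exp (-r) * r ^ (n + 1) / (n + 1)! * ((n + 1 : ℕ) * g (n + 1)) =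
      r * (Real.exp (-r) * r ^ n / n ! * g (n + 1)) := by
    rw [Nat.factorial_succ]
    push_cast
    field_simp
    ring
  refine (hasSum_nat_add_iff' 1).mp ?_
  simpa only [Finset.sum_range_one, Nat.cast_zero, zero_mul, mul_zero, sub_zero, shift]
    using hg.mul_left (r : ℝ)

lemma integrable_poissonMeasure_of_hasSum {f : ℕ → ℝ} (hf : ∀ n, 0 ≤ f n) {s : ℝ}
    (hs : HasSum (fun n ↦ Real.exp (-r) * r ^ n / n ! * f n) s) :
    Integrable f (poissonMeasure r) := by
  rw [integrable_poissonMeasure_iff]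
  simpa only [Real.norm_of_nonneg (hf _)] using hs.summable

lemma integral_poissonMeasure_of_hasSum {f : ℕ → ℝ} {s : ℝ}
    (hs : HasSum (fun n ↦ Real.exp (-r) * r ^ n / n ! * f n) s) :
    ∫ n, f n ∂poissonMeasure r = s := by
  rw [integral_poissonMeasure]
  exact hs.tsum_eq

lemma hasSum_poisson_mul_natCast :
    HasSum (fun n ↦ Real.exp (-r) * r ^ n / n ! * n) r := by
  simpa using hasSum_poisson_mul_natCast_mul r (g := fun _ ↦ 1) (s := 1)
    (by simpa using hasSum_one_poissonMeasure r)

lemma hasSum_poisson_mul_natCast_sq :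
    HasSum (fun n ↦ Real.exp (-r) * r ^ n / n ! * (n : ℝ) ^ 2) (r + r ^ 2) := by
  have h := hasSum_poisson_mul_natCast_mul r (g := fun n ↦ (n : ℝ)) (by
    simpa [mul_add] using (hasSum_poisson_mul_natCast r).add (hasSum_one_poissonMeasure r))
  convert h using 1
  · ext n; ring
  · ring

lemma integral_natCast_poissonMeasure : ∫ n, (n : ℝ) ∂poissonMeasure r = r :=
  integral_poissonMeasure_of_hasSum r (hasSum_poisson_mul_natCast r)

lemma integral_natCast_sq_poissonMeasure :
    ∫ n, (n : ℝ) ^ 2 ∂poissonMeasure r = r + r ^ 2 :=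
  integral_poissonMeasure_of_hasSum r (hasSum_poisson_mul_natCast_sq r)

lemma memLp_two_natCast_poissonMeasure : MemLp (fun n : ℕ ↦ (n : ℝ)) 2 (poissonMeasure r) :=
  (memLp_two_iff_integrable_sq .of_discrete).mpr <|
    integrable_poissonMeasure_of_hasSum r (fun _ ↦ sq_nonneg _) (hasSum_poisson_mul_natCast_sq r)

variable {Ω : Type*} [MeasurableSpace Ω] {μ : Measure Ω} {T : Ω → ℕ} {r}

lemma hasLaw_poissonMeasure_of_measure_eq (hT : Measurable T)
    (h : ∀ k : ℕ, μ {ω | T ω = k} = ENNReal.ofReal (Real.exp (-r) * r ^ k / k !)) :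
    HasLaw T (poissonMeasure r) μ where
  aemeasurable := hT.aemeasurable
  map_eq := Measure.ext_of_singleton fun k ↦ by
    rw [Measure.map_apply hT (measurableSet_singleton k), poissonMeasure_singleton]
    exact h k

lemma HasLaw.integral_natCast_poissonMeasure (hT : HasLaw T (poissonMeasure r) μ) :
    ∫ ω, (T ω : ℝ) ∂μ = r :=
  (hT.integral_comp (f := fun n : ℕ ↦ (n : ℝ)) .of_discrete).trans
    (ProbabilityTheory.integral_natCast_poissonMeasure r)

lemma HasLaw.integral_natCast_sq_poissonMeasure (hT : HasLaw T (poissonMeasure r) μ) :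
    ∫ ω, (T ω : ℝ) ^ 2 ∂μ = r + r ^ 2 :=
  (hT.integral_comp (f := fun n : ℕ ↦ (n : ℝ) ^ 2) .of_discrete).trans
    (ProbabilityTheory.integral_natCast_sq_poissonMeasure r)

lemma HasLaw.memLp_two_natCast_poissonMeasure (hT : HasLaw T (poissonMeasure r) μ) :
    MemLp (fun ω ↦ (T ω : ℝ)) 2 μ := by
  have h := ProbabilityTheory.memLp_two_natCast_poissonMeasure r
  rw [← hT.map_eq] at h
  exact (memLp_map_measure_iff .of_discrete hT.aemeasurable).mp h

end Poisson

section ZeroInflation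

variable {Ω M : Type*} [MeasurableSpace Ω] {μ : Measure Ω} [AddMonoid M] [MeasurableSpace M]
  {W : Ω → ℕ}

lemma integral_natCast_of_eq_zero_or_eq_one (hW : Measurable W)
    (hW01 : ∀ ω, W ω = 0 ∨ W ω = 1) : ∫ ω, (W ω : ℝ) ∂μ = μ.real {ω | W ω = 1} := by
  have hW_eq : (fun ω ↦ (W ω : ℝ)) = {ω | W ω = 1}.indicator 1 := by
    ext ω
    rcases hW01 ω with h | h <;> simp [h]
  rw [hW_eq]
  exact integral_indicator_one (hW (measurableSet_singleton 1))

lemma integral_comp_nsmul_of_indepFun (hW : Measurable W) (hW01 : ∀ ω, W ω = 0 ∨ W ω = 1)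
    {Z : Ω → M} (hZ : Measurable Z) (hWZ : IndepFun W Z μ) {h : M → ℝ} (hh : Measurable h)
    (h0 : h 0 = 0) :
    ∫ ω, h (W ω • Z ω) ∂μ = μ.real {ω | W ω = 1} * ∫ ω, h (Z ω) ∂μ := by
  simp_rw [apply_nsmul_of_eq_zero_or_eq_one h0 (hW01 _)]
  rw [← integral_natCast_of_eq_zero_or_eq_one hW hW01]
  exact (hWZ.comp measurable_from_nat hh).integral_fun_mul_eq_mul_integral
    (measurable_from_nat.comp hW).aestronglyMeasurable (hh.comp hZ).aestronglyMeasurable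

variable {T : Ω → ℕ}

lemma integral_natCast_mul_of_indepFun (hW : Measurable W) (hW01 : ∀ ω, W ω = 0 ∨ W ω = 1)
    (hT : Measurable T) (hWT : IndepFun W T μ) :
    ∫ ω, ((W ω * T ω : ℕ) : ℝ) ∂μ = μ.real {ω | W ω = 1} * ∫ ω, (T ω : ℝ) ∂μ :=
  integral_comp_nsmul_of_indepFun hW hW01 hT hWT measurable_from_nat Nat.cast_zero

lemma integral_natCast_mul_sq_of_indepFun (hW : Measurable W) (hW01 : ∀ ω, W ω = 0 ∨ W ω = 1)
    (hT : Measurable T) (hWT : IndepFun W T μ) :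
    ∫ ω, ((W ω * T ω : ℕ) : ℝ) ^ 2 ∂μ = μ.real {ω | W ω = 1} * ∫ ω, (T ω : ℝ) ^ 2 ∂μ :=
  integral_comp_nsmul_of_indepFun hW hW01 hT hWT (h := fun n : ℕ ↦ (n : ℝ) ^ 2)
    measurable_from_nat (by simp)

lemma variance_natCast_mul_of_indepFun [IsProbabilityMeasure μ] (hW : Measurable W)
    (hW01 : ∀ ω, W ω = 0 ∨ W ω = 1) (hT : Measurable T) (hWT : IndepFun W T μ)
    (hT2 : MemLp (fun ω ↦ (T ω : ℝ)) 2 μ) :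
    variance (fun ω ↦ ((W ω * T ω : ℕ) : ℝ)) μ =
      μ.real {ω | W ω = 1} * ∫ ω, (T ω : ℝ) ^ 2 ∂μ
        - (μ.real {ω | W ω = 1} * ∫ ω, (T ω : ℝ) ∂μ) ^ 2 := by
  have hWT2 : MemLp (fun ω ↦ ((W ω * T ω : ℕ) : ℝ)) 2 μ := by
    refine hT2.mono (measurable_from_nat.comp (hW.mul hT)).aestronglyMeasurable
      (ae_of_all _ fun ω ↦ ?_)
    rcases hW01 ω with h | h <;> simp [h]
  rw [variance_eq_sub hWT2, ← integral_natCast_mul_of_indepFun hW hW01 hT hWT,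
    ← integral_natCast_mul_sq_of_indepFun hW hW01 hT hWT]
  rfl

end ZeroInflation

end ProbabilityTheory

lemma zeroInflated_correlation_eq {φ l₁ l₂ : ℝ} (hφ : φ < 1) (hl : 0 ≤ l₁ * l₂) :
    ((1 - φ) * (l₁ * l₂) - (1 - φ) * l₁ * ((1 - φ) * l₂)) /
      √(((1 - φ) * (l₁ + l₁ ^ 2) - ((1 - φ) * l₁) ^ 2) *
        ((1 - φ) * (l₂ + l₂ ^ 2) - ((1 - φ) * l₂) ^ 2))
    = φ * √(l₁ * l₂ / ((1 + φ * l₁) * (1 + φ * l₂))) := by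
  have hq : 0 < 1 - φ := by linarith
  rw [show (1 - φ) * (l₁ * l₂) - (1 - φ) * l₁ * ((1 - φ) * l₂) = (1 - φ) * (φ * (l₁ * l₂)) by ring,
    show ((1 - φ) * (l₁ + l₁ ^ 2) - ((1 - φ) * l₁) ^ 2) *
        ((1 - φ) * (l₂ + l₂ ^ 2) - ((1 - φ) * l₂) ^ 2)
      = (1 - φ) ^ 2 * (l₁ * l₂ * ((1 + φ * l₁) * (1 + φ * l₂))) by ring,
    Real.sqrt_mul (sq_nonneg _), Real.sqrt_sq hq.le, mul_div_mul_left _ _ hq.ne',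
    Real.sqrt_mul hl, Real.sqrt_div hl, mul_div_assoc, ← div_div, Real.div_sqrt]

/-- In the common zero-inflation bivariate model with independent counts,
`(X₁, X₂) = (W T₁, W T₂)` with `W ~ Bernoulli(1-φ)`, `T₁ ~ Poisson(λ₁)`, `T₂ ~ Poisson(λ₂)`
mutually independent, one has `corr(X₁, X₂) = φ √(λ₁ λ₂ / ((1+φλ₁)(1+φλ₂)))`, where
`corr(U,V) = cov(U,V)/√(var(U) var(V))` and `cov(U,V) = E(UV) - E(U)E(V)`.
Mutual independence of `W, T₁, T₂` is expressed by the equivalent sequential conditions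
`W ⟂ (T₁, T₂)` and `T₁ ⟂ T₂`. -/
theorem stmt_8 {Ω : Type*} [MeasurableSpace Ω] (μ : Measure Ω) [IsProbabilityMeasure μ]
    (φ lam₁ lam₂ : ℝ) (hφ : φ ∈ Set.Ioo (0 : ℝ) 1) (hlam₁ : 0 < lam₁) (hlam₂ : 0 < lam₂)
    (W T₁ T₂ : Ω → ℕ) (hWm : Measurable W) (hT₁m : Measurable T₁) (hT₂m : Measurable T₂)
    (hW01 : ∀ ω, W ω = 0 ∨ W ω = 1)
    (hW1 : μ {ω | W ω = 1} = ENNReal.ofReal (1 - φ))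
    (hT₁ : ∀ k : ℕ,
      μ {ω | T₁ ω = k} = ENNReal.ofReal (Real.exp (-lam₁) * lam₁ ^ k / Nat.factorial k))
    (hT₂ : ∀ k : ℕ,
      μ {ω | T₂ ω = k} = ENNReal.ofReal (Real.exp (-lam₂) * lam₂ ^ k / Nat.factorial k))
    (hind₁ : IndepFun W (fun ω => (T₁ ω, T₂ ω)) μ)
    (hind₂ : IndepFun T₁ T₂ μ) :
    ((∫ ω, ((W ω * T₁ ω : ℕ) : ℝ) * ((W ω * T₂ ω : ℕ) : ℝ) ∂μ)
        - (∫ ω, ((W ω * T₁ ω : ℕ) : ℝ) ∂μ) * (∫ ω, ((W ω * T₂ ω : ℕ) : ℝ) ∂μ))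
      / Real.sqrt (variance (fun ω => ((W ω * T₁ ω : ℕ) : ℝ)) μ
          * variance (fun ω => ((W ω * T₂ ω : ℕ) : ℝ)) μ)
    = φ * Real.sqrt (lam₁ * lam₂ / ((1 + φ * lam₁) * (1 + φ * lam₂))) := by
  have hq : μ.real {ω | W ω = 1} = 1 - φ := by
    rw [measureReal_def, hW1, ENNReal.toReal_ofReal (by linarith [hφ.2])]
  have hT₁law := hasLaw_poissonMeasure_of_measure_eq (r := ⟨lam₁, hlam₁.le⟩) hT₁m hT₁
  have hT₂law := hasLaw_poissonMeasure_of_measure_eq (r := ⟨lam₂, hlam₂.le⟩) hT₂m hT₂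
  have hWT₁ : IndepFun W T₁ μ := hind₁.comp measurable_id measurable_fst
  have hWT₂ : IndepFun W T₂ μ := hind₁.comp measurable_id measurable_snd
  have hcross := integral_comp_nsmul_of_indepFun hWm hW01 (hT₁m.prodMk hT₂m) hind₁
    (h := fun x : ℕ × ℕ ↦ (x.1 : ℝ) * x.2) .of_discrete (by simp)
  simp only [Prod.smul_mk, smul_eq_mul] at hcross
  have hT₁T₂ : ∫ ω, (T₁ ω : ℝ) * T₂ ω ∂μ = (∫ ω, (T₁ ω : ℝ) ∂μ) * ∫ ω, (T₂ ω : ℝ) ∂μ :=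
    (hind₂.comp measurable_from_nat measurable_from_nat).integral_fun_mul_eq_mul_integral
      (measurable_from_nat.comp hT₁m).aestronglyMeasurable
      (measurable_from_nat.comp hT₂m).aestronglyMeasurable
  rw [hcross, hT₁T₂, integral_natCast_mul_of_indepFun hWm hW01 hT₁m hWT₁,
    integral_natCast_mul_of_indepFun hWm hW01 hT₂m hWT₂,
    variance_natCast_mul_of_indepFun hWm hW01 hT₁m hWT₁ hT₁law.memLp_two_natCast_poissonMeasure,
    variance_natCast_mul_of_indepFun hWm hW01 hT₂m hWT₂ hT₂law.memLp_two_natCast_poissonMeasure,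
    hT₁law.integral_natCast_poissonMeasure, hT₂law.integral_natCast_poissonMeasure,
    hT₁law.integral_natCast_sq_poissonMeasure, hT₂law.integral_natCast_sq_poissonMeasure, hq]
  exact zeroInflated_correlation_eq hφ.2 (mul_pos hlam₁ hlam₂).le
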